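/- Let 𝐒 be the weighted Horton–Strahler number and define, for a weighted tree with edge lengths 𝐓 with 𝐒(𝐓) ≥ r, the r-Horton-pruned tree 𝐑_r(𝐓). Then the number of children of the root of R_r(𝐓) is never equal to 1, and 𝐒(𝐑_r(𝐓)) = 𝐒(𝐓) - r. -/

import Mathlib

/-!
`𝐒` of an inner node is `pairCombine` of its children's values: the largest of `0`, all values,
and `1 + min` over all pairs of distinct children. Two facts about `pairCombine` drive an
induction on the tree. First, once the children with `𝐒 ≥ r` alone give a value `≥ r + 1`, the
other children change nothing, since every term they contribute is `< r + 1`. Second, for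
`r ≥ 0`, subtracting `r` from every entry subtracts `r` from any value `≥ r`. If at least two
children survive the pruning, the induction hypothesis and these facts give
`𝐒(𝐑_r 𝐓) = 𝐒(𝐓) - r`. If only one child survives and its pruned tree is not a single leaf, then
that pruned tree has a branching root, so the child has `𝐒 ≥ r + 1` and `𝐒(𝐓)` is the child's
`𝐒`. Contracting the chain then keeps `𝐒`.
-/

/-- `max_{i,j} max (v_i, v_j, 1_{i≠j} + min (v_i, v_j))` over a list of reals
(indices are distinguished via `List.enum`). -/
def pairCombine (l : List ℝ) : ℝ :=
  (((l.zipIdx.map Prod.swap).map (fun p => (l.zipIdx.map Prod.swap).map (fun q =>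
      max (max p.2 q.2) ((if p.1 ≠ q.1 then (1:ℝ) else 0) + min p.2 q.2)))).flatten).foldr max 0

/-- Weighted trees with edge lengths: each node carries the length of the edge to its parent
and a real number (only the numbers at the leaves — the weights — are relevant). -/
inductive WLTree : Type where
  | node : ℝ → ℝ → List WLTree → WLTree

namespace WLTree

/-- Length of the root edge. -/
def len : WLTree → ℝ
  | node l _ _ => l

/-- The list of root subtrees. -/
def kids : WLTree → List WLTree
  | node _ _ ts => ts

/-- The weighted Horton–Strahler number (edge lengths are irrelevant): the weight for a single
node; otherwise `max_{i,j} max (𝐒(𝐭_i), 𝐒(𝐭_j), 1_{i≠j} + min (𝐒(𝐭_i), 𝐒(𝐭_j)))` over the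
root subtrees. -/
def whs : WLTree → ℝ
  | node _ w [] => w
  | node _ _ (t :: ts) => pairCombine ((t :: ts).attach.map (fun s => whs s.1))
decreasing_by simp_wf; have := List.sizeOf_lt_of_mem s.2; simp only [List.cons.sizeOf_spec] at this ⊢; omega

/-- The list of the weights of the leaves. -/
def leafWeights : WLTree → List ℝ
  | node _ w [] => [w]
  | node _ _ (t :: ts) => ((t :: ts).attach.map (fun s => leafWeights s.1)).flatten
decreasing_by simp_wf; have := List.sizeOf_lt_of_mem s.2; simp only [List.cons.sizeOf_spec] at this ⊢; omega

/-- All edge lengths are positive. -/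
def PosLen : WLTree → Prop
  | node l _ ts => 0 < l ∧ ∀ s ∈ ts.attach, PosLen s.1
decreasing_by simp_wf; have := List.sizeOf_lt_of_mem s.2; (try simp only [List.cons.sizeOf_spec] at this ⊢); omega

/-- The `r`-weighted Horton pruning `𝐑_r(𝐓)`: delete all root subtrees whose weighted
Horton–Strahler number is `< r`, contract the chains of vertices with a single remaining
child (adding the edge lengths), give a new leaf the weight "maximal weighted Horton–Strahler
number achieved along the contracted part, minus `r`" (for the subtree stemming from it this
maximum is the weighted Horton–Strahler number of that whole subtree). -/
noncomputable def prune (r : ℝ) : WLTree → WLTree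
  | node l w ts =>
    let goods := ts.attach.filterMap
      (fun s => if r ≤ whs s.1 then some (prune r s.1) else none)
    match goods with
    | [] => node l (whs (node l w ts) - r) []
    | [s'] =>
        if s'.kids.isEmpty then node (l + s'.len) (whs (node l w ts) - r) []
        else node (l + s'.len) 0 s'.kids
    | _ => node l 0 goods
decreasing_by simp_wf; have := List.sizeOf_lt_of_mem s.2; (try simp only [List.cons.sizeOf_spec] at this ⊢); omega

end WLTree

theorem List.foldr_max_le_iff {l : List ℝ} {a b : ℝ} :
    l.foldr max a ≤ b ↔ a ≤ b ∧ ∀ x ∈ l, x ≤ b := by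
  induction l with
  | nil => simp
  | cons x l ih => simp [ih, and_left_comm]

theorem List.mem_map_swap_zipIdx {α : Type*} {l : List α} {i : ℕ} {x : α} :
    (i, x) ∈ l.zipIdx.map Prod.swap ↔ ∃ h : i < l.length, l[i] = x := by
  simp [List.mem_zipIdx_iff_getElem?, List.getElem?_eq_some_iff]

theorem List.filterMap_attach_ite {α β : Type*} (l : List α) (p : α → Prop) [DecidablePred p]
    (f : α → β) :
    l.attach.filterMap (fun s => if p s.1 then some (f s.1) else none) = (l.filter p).map f := by
  induction l with
  | nil => rfl
  | cons a l ih => by_cases h : p a <;> simp_all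

section PairCombine

variable {l : List ℝ} {r b : ℝ}

theorem pairCombine_le_iff_getElem : pairCombine l ≤ b ↔ 0 ≤ b ∧
    ∀ i j (hi : i < l.length) (hj : j < l.length),
      max (max l[i] l[j]) ((if i ≠ j then 1 else 0) + min l[i] l[j]) ≤ b := by
  rw [pairCombine, List.foldr_max_le_iff]
  refine and_congr_right fun _ => ⟨fun h i j hi hj => h _ ?_, fun h a ha => ?_⟩
  · refine List.mem_flatten.2 ⟨_, List.mem_map.2 ⟨(i, l[i]), ?_, rfl⟩,
      List.mem_map.2 ⟨(j, l[j]), ?_, rfl⟩⟩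
    exacts [List.mem_map_swap_zipIdx.2 ⟨hi, rfl⟩, List.mem_map_swap_zipIdx.2 ⟨hj, rfl⟩]
  · obtain ⟨_, hrow, ha⟩ := List.mem_flatten.1 ha
    obtain ⟨⟨i, x⟩, hx, rfl⟩ := List.mem_map.1 hrow
    obtain ⟨⟨j, y⟩, hy, rfl⟩ := List.mem_map.1 ha
    obtain ⟨hi, rfl⟩ := List.mem_map_swap_zipIdx.1 hx
    obtain ⟨hj, rfl⟩ := List.mem_map_swap_zipIdx.1 hy
    exact h i j hi hj

theorem pairCombine_le_iff : pairCombine l ≤ b ↔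
    0 ≤ b ∧ (∀ x ∈ l, x ≤ b) ∧ l.Pairwise (fun x y => 1 + min x y ≤ b) := by
  rw [pairCombine_le_iff_getElem, List.pairwise_iff_getElem, List.forall_mem_iff_getElem]
  refine and_congr_right fun _ => ⟨fun h => ⟨fun i hi => ?_, fun i j hi hj hij => ?_⟩, ?_⟩
  · simpa using h i i hi hi
  · simpa [hij.ne] using (le_max_right _ _).trans (h i j hi hj)
  · rintro ⟨h₁, h₂⟩ i j hi hj
    rcases lt_trichotomy i j with hij | rfl | hij
    · simp [hij.ne, h₁, h₂ i j hi hj hij]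
    · simp [h₁]
    · simp [hij.ne', h₁, min_comm (l[i]), h₂ j i hj hi hij]

variable (l) in
theorem pairCombine_nonneg : 0 ≤ pairCombine l :=
  (pairCombine_le_iff.1 le_rfl).1

theorem le_pairCombine_of_mem {x : ℝ} (h : x ∈ l) : x ≤ pairCombine l :=
  (pairCombine_le_iff.1 le_rfl).2.1 x h

variable (l) in
theorem pairwise_one_add_min_le_pairCombine :
    l.Pairwise (fun x y => 1 + min x y ≤ pairCombine l) :=
  (pairCombine_le_iff.1 le_rfl).2.2

theorem pairCombine_singleton (x : ℝ) : pairCombine [x] = max x 0 :=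
  le_antisymm (pairCombine_le_iff.2 ⟨le_max_right _ _, by simp, by simp⟩)
    (max_le (le_pairCombine_of_mem (List.mem_singleton_self x)) (pairCombine_nonneg _))

theorem pairCombine_mono {l' : List ℝ} (h : l.Sublist l') : pairCombine l ≤ pairCombine l' :=
  pairCombine_le_iff.2 ⟨pairCombine_nonneg l', fun _ hx => le_pairCombine_of_mem (h.subset hx),
    (pairwise_one_add_min_le_pairCombine l').sublist h⟩

theorem add_one_le_pairCombine (hl : ∀ x ∈ l, r ≤ x) (h : 1 < l.length) :
    r + 1 ≤ pairCombine l := by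
  obtain _ | ⟨x, _ | ⟨y, l'⟩⟩ := l
  · simp at h
  · simp at h
  have hxy := List.rel_of_pairwise_cons (pairwise_one_add_min_le_pairCombine (x :: y :: l'))
    (List.mem_cons_self ..)
  have := le_min (hl x (by simp)) (hl y (by simp))
  linarith

theorem pairCombine_filter (h : r + 1 ≤ pairCombine (l.filter (r ≤ ·))) :
    pairCombine (l.filter (r ≤ ·)) = pairCombine l := by
  refine le_antisymm (pairCombine_mono List.filter_sublist)
    (pairCombine_le_iff.2 ⟨pairCombine_nonneg _, fun x hx => ?_, ?_⟩)
  · by_cases hrx : r ≤ x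
    · exact le_pairCombine_of_mem (List.mem_filter.2 ⟨hx, by simpa using hrx⟩)
    · linarith
  · have hF := pairwise_one_add_min_le_pairCombine (l.filter (r ≤ ·))
    rw [List.pairwise_filter] at hF
    refine hF.imp fun {x y} hxy => ?_
    by_cases hx : r ≤ x
    · by_cases hy : r ≤ y
      · exact hxy (by simpa using hx) (by simpa using hy)
      · linarith [min_le_right x y]
    · linarith [min_le_left x y]

theorem pairCombine_map_sub (hr : 0 ≤ r) (h : r ≤ pairCombine l) :
    pairCombine (l.map (· - r)) = pairCombine l - r := by
  refine le_antisymm (pairCombine_le_iff.2 ⟨by linarith, ?_, ?_⟩)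
    (sub_le_iff_le_add.2 (pairCombine_le_iff.2 ⟨?_, fun x hx => ?_, ?_⟩))
  · simpa using fun x hx => le_pairCombine_of_mem hx
  · refine List.pairwise_map.2 ((pairwise_one_add_min_le_pairCombine l).imp fun hxy => ?_)
    rw [min_sub_sub_right]
    linarith
  · linarith [pairCombine_nonneg (l.map (· - r))]
  · linarith [le_pairCombine_of_mem (List.mem_map_of_mem (f := (· - r)) hx)]
  · have := List.pairwise_map.1 (pairwise_one_add_min_le_pairCombine (l.map (· - r)))
    refine this.imp fun hxy => ?_
    rw [min_sub_sub_right] at hxy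
    linarith

end PairCombine

namespace WLTree

@[elab_as_elim]
theorem induction_mem {motive : WLTree → Prop}
    (node : ∀ l w ts, (∀ t ∈ ts, motive t) → motive (node l w ts)) : ∀ t, motive t
  | .node l w ts => node l w ts fun t _ => induction_mem node t

section

variable {r l w : ℝ} {ts : List WLTree}

theorem whs_leaf : whs (node l w []) = w := by
  rw [whs]

theorem whs_node (h : ts ≠ []) : whs (node l w ts) = pairCombine (ts.map whs) := by
  obtain _ | ⟨t, ts⟩ := ts
  · contradiction
  · rw [whs, List.attach_map_val]

theorem whs_node_kids {t : WLTree} (h : t.kids ≠ []) : whs (node l w t.kids) = whs t := by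
  obtain ⟨l', w', ts⟩ := t
  exact (whs_node h).trans (whs_node h).symm

theorem whs_le_whs_node {t : WLTree} (h : t ∈ ts) : whs t ≤ whs (node l w ts) := by
  rw [whs_node (List.ne_nil_of_mem h)]
  exact le_pairCombine_of_mem (List.mem_map_of_mem h)

theorem add_one_le_pairCombine_filter (h : 1 < (ts.filter (r ≤ whs ·)).length) :
    r + 1 ≤ pairCombine ((ts.filter (r ≤ whs ·)).map whs) :=
  add_one_le_pairCombine
    (List.forall_mem_map.2 fun _ hs => of_decide_eq_true (List.mem_filter.1 hs).2)
    (by simpa using h)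

theorem whs_node_eq_pairCombine_filter (hts : ts ≠ [])
    (h : r + 1 ≤ pairCombine ((ts.filter (r ≤ whs ·)).map whs)) :
    whs (node l w ts) = pairCombine ((ts.filter (r ≤ whs ·)).map whs) := by
  have hmap : (ts.filter (r ≤ whs ·)).map whs = (ts.map whs).filter (r ≤ ·) :=
    (List.filter_map (p := (r ≤ ·))).symm
  rw [hmap] at h ⊢
  rw [whs_node hts, pairCombine_filter h]

theorem prune_node (r l w : ℝ) (ts : List WLTree) : prune r (node l w ts) =
    match (ts.filter (r ≤ whs ·)).map (prune r) with
    | [] => node l (whs (node l w ts) - r) []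
    | [s'] =>
        if s'.kids.isEmpty then node (l + s'.len) (whs (node l w ts) - r) []
        else node (l + s'.len) 0 s'.kids
    | _ => node l 0 ((ts.filter (r ≤ whs ·)).map (prune r)) := by
  rw [prune, List.filterMap_attach_ite ts (r ≤ whs ·) (prune r)]

theorem prune_of_filter_eq_nil (h : ts.filter (r ≤ whs ·) = []) :
    prune r (node l w ts) = node l (whs (node l w ts) - r) [] := by
  rw [prune_node, h]
  rfl

theorem prune_of_filter_eq_singleton {t : WLTree} (h : ts.filter (r ≤ whs ·) = [t]) :
    prune r (node l w ts) =
      if (prune r t).kids.isEmpty then node (l + (prune r t).len) (whs (node l w ts) - r) []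
      else node (l + (prune r t).len) 0 (prune r t).kids := by
  rw [prune_node, h]
  rfl

theorem prune_of_one_lt_length_filter (h : 1 < (ts.filter (r ≤ whs ·)).length) :
    prune r (node l w ts) = node l 0 ((ts.filter (r ≤ whs ·)).map (prune r)) := by
  rw [prune_node]
  rcases hF : ts.filter (r ≤ whs ·) with _ | ⟨t₀, _ | ⟨t₁, rest⟩⟩ <;> simp_all

theorem length_kids_prune_ne_one (t : WLTree) : (prune r t).kids.length ≠ 1 := by
  induction t using induction_mem with
  | node l w ts ih =>
    rcases hF : ts.filter (r ≤ whs ·) with _ | ⟨t₀, _ | ⟨t₁, rest⟩⟩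
    · simp [prune_of_filter_eq_nil hF, kids]
    · rw [prune_of_filter_eq_singleton hF]
      split_ifs
      · simp [kids]
      · exact ih t₀ (List.mem_of_mem_filter (hF ▸ List.mem_singleton_self t₀))
    · have hlen : 1 < (ts.filter (r ≤ whs ·)).length := by simp [hF]
      simp [prune_of_one_lt_length_filter hlen, hF, kids]

theorem add_one_le_whs_of_kids_prune_ne_nil {t : WLTree} (h : (prune r t).kids ≠ []) :
    r + 1 ≤ whs t := by
  induction t using induction_mem with
  | node l w ts ih =>
    rcases hF : ts.filter (r ≤ whs ·) with _ | ⟨t₀, _ | ⟨t₁, rest⟩⟩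
    · simp [prune_of_filter_eq_nil hF, kids] at h
    · have ht₀ : t₀ ∈ ts := List.mem_of_mem_filter (hF ▸ List.mem_singleton_self t₀)
      rw [prune_of_filter_eq_singleton hF] at h
      split_ifs at h
      · simp [kids] at h
      · exact (ih t₀ ht₀ h).trans (whs_le_whs_node ht₀)
    · have hlen : 1 < (ts.filter (r ≤ whs ·)).length := by simp [hF]
      have hts : ts ≠ [] := List.ne_nil_of_mem (List.mem_of_mem_filter (hF ▸ List.mem_cons_self ..))
      have h2 := add_one_le_pairCombine_filter hlen
      rwa [whs_node_eq_pairCombine_filter hts h2]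

theorem whs_prune (hr : 0 ≤ r) (t : WLTree) : whs (prune r t) = whs t - r := by
  induction t using induction_mem with
  | node l w ts ih =>
    rcases hF : ts.filter (r ≤ whs ·) with _ | ⟨t₀, _ | ⟨t₁, rest⟩⟩
    · rw [prune_of_filter_eq_nil hF, whs_leaf]
    · have ht₀ : t₀ ∈ ts := List.mem_of_mem_filter (hF ▸ List.mem_singleton_self t₀)
      rw [prune_of_filter_eq_singleton hF]
      split_ifs with hleaf
      · exact whs_leaf
      · have hkids : (prune r t₀).kids ≠ [] := fun h => hleaf (by simp [h])
        have hbig := add_one_le_whs_of_kids_prune_ne_nil hkids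
        have hsingle : pairCombine ((ts.filter (r ≤ whs ·)).map whs) = whs t₀ := by
          rw [hF, List.map_singleton, pairCombine_singleton, max_eq_left (by linarith)]
        rw [whs_node_kids hkids, ih t₀ ht₀,
          whs_node_eq_pairCombine_filter (List.ne_nil_of_mem ht₀) (hsingle ▸ hbig), hsingle]
    · have hlen : 1 < (ts.filter (r ≤ whs ·)).length := by simp [hF]
      have hts : ts ≠ [] := List.ne_nil_of_mem (List.mem_of_mem_filter (hF ▸ List.mem_cons_self ..))
      have h2 := add_one_le_pairCombine_filter hlen
      rw [prune_of_one_lt_length_filter hlen, whs_node_eq_pairCombine_filter hts h2]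
      set F := ts.filter (r ≤ whs ·)
      calc whs (node l 0 (F.map (prune r))) = pairCombine ((F.map whs).map (· - r)) := by
            rw [whs_node (by simp [hF]), List.map_map, List.map_map]
            exact congrArg pairCombine
              (List.map_congr_left fun s hs => ih s (List.mem_of_mem_filter hs))
        _ = pairCombine (F.map whs) - r := pairCombine_map_sub hr (by linarith)

end

end WLTree

theorem stmt_18_general (r : ℝ) (hr : 0 ≤ r) (T : WLTree) :
    (WLTree.prune r T).kids.length ≠ 1
      ∧ (WLTree.prune r T).whs = T.whs - r :=
  ⟨WLTree.length_kids_prune_ne_one T, WLTree.whs_prune hr T⟩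

/-- For a weighted tree with edge lengths `𝐓` (positive edge lengths, leaf
weights in `[0,1)`) with `𝐒(𝐓) ≥ r ≥ 0`, the root of the `r`-Horton-pruned tree `𝐑_r(𝐓)`
never has exactly one child, and `𝐒(𝐑_r(𝐓)) = 𝐒(𝐓) - r`. -/
theorem stmt_18 (r : ℝ) (hr : 0 ≤ r) (T : WLTree)
    (hlen : T.PosLen) (hw : ∀ w ∈ T.leafWeights, w ∈ Set.Ico (0:ℝ) 1)
    (hS : r ≤ T.whs) :
    (WLTree.prune r T).kids.length ≠ 1
      ∧ (WLTree.prune r T).whs = T.whs - r :=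
  stmt_18_general r hr T
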